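/- arXiv:2404.13758 — 13 statements merged into one kernel-verified Lean document; each statement's English description precedes it below -/
import Mathlib

section
/- A pair (S,s) with s(x,y) = (x·y, θ_x(y)) is a set-theoretic solution of the Pentagon Equation (i.e. s₂₃s₁₃s₁₂ = s₁₂s₂₃) if and only if for all x,y,z ∈ S: (x·y)·z = x·(y·z), θ_x(y)·θ_{x·y}(z) = θ_x(y·z), and θ_{θ_x(y)} ∘ θ_{x·y} = θ_y. -/
/-- The map `s(x,y) = (x·y, θ_x(y))`. -/
def pentMap {S : Type*} (mul θ : S → S → S) : S × S → S × S :=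
  fun p => (mul p.1 p.2, θ p.1 p.2)

/-- `s₁₂ = s × id` on `S³`. -/
def map12 {S : Type*} (s : S × S → S × S) : S × S × S → S × S × S :=
  fun p => ((s (p.1, p.2.1)).1, (s (p.1, p.2.1)).2, p.2.2)

/-- `s₂₃ = id × s` on `S³`. -/
def map23 {S : Type*} (s : S × S → S × S) : S × S × S → S × S × S :=
  fun p => (p.1, s p.2)

/-- `s₁₃ = (τ × id)(id × s)(τ × id)` on `S³`. -/
def map13 {S : Type*} (s : S × S → S × S) : S × S × S → S × S × S :=
  fun p => ((s (p.1, p.2.2)).1, p.2.1, (s (p.1, p.2.2)).2)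

/-- `(S,s)` is a set-theoretic solution of the Pentagon Equation. -/
def IsPentagonSolution {S : Type*} (s : S × S → S × S) : Prop :=
  map23 s ∘ map13 s ∘ map12 s = map12 s ∘ map23 s

theorem stmt_0 {S : Type*} [Nonempty S] (mul θ : S → S → S) :
    IsPentagonSolution (pentMap mul θ) ↔
      (∀ x y z : S, mul (mul x y) z = mul x (mul y z)) ∧
      (∀ x y z : S, mul (θ x y) (θ (mul x y) z) = θ x (mul y z)) ∧
      (∀ x y : S, (θ (θ x y)) ∘ (θ (mul x y)) = θ y) := by
  constructor
  · intro h
    have h' := fun x y z => congrFun h (x, y, z)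
    simp only [IsPentagonSolution, pentMap, map12, map13, map23, Function.comp_apply,
      Prod.mk.injEq] at h'
    exact ⟨fun x y z => (h' x y z).1, fun x y z => (h' x y z).2.1,
      fun x y => funext fun z => (h' x y z).2.2⟩
  · rintro ⟨h1, h2, h3⟩
    funext p
    obtain ⟨x, y, z⟩ := p
    simp only [IsPentagonSolution, pentMap, map12, map13, map23, Function.comp_apply,
      Prod.mk.injEq]
    exact ⟨h1 x y z, h2 x y z, congrFun (h3 x y) z⟩
end

section
/- A set-theoretic solution (S,s) of the Pentagon Equation, with s(x,y) = (x·y, θ_x(y)), is commutative (i.e. s₁₂s₁₃ = s₁₃s₁₂) if and only if x·y·z = x·z·y and θ_{x·y} = θ_x for all x,y,z ∈ S. -/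
/-- `(S,s)` is a commutative solution: `s₁₂ ∘ s₁₃ = s₁₃ ∘ s₁₂`. -/
def IsCommutativeSolution {S : Type*} (s : S × S → S × S) : Prop :=
  map12 s ∘ map13 s = map13 s ∘ map12 s

theorem stmt_1 {S : Type*} (mul θ : S → S → S)
    (hassoc : ∀ x y z : S, mul (mul x y) z = mul x (mul y z))
    (heq2 : ∀ x y z : S, mul (θ x y) (θ (mul x y) z) = θ x (mul y z))
    (heq3 : ∀ x y : S, (θ (θ x y)) ∘ (θ (mul x y)) = θ y) :
    IsCommutativeSolution (pentMap mul θ) ↔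
      (∀ x y z : S, mul (mul x y) z = mul (mul x z) y) ∧
      (∀ x y : S, θ (mul x y) = θ x) := by
  constructor
  · intro h
    constructor
    · intro x y z
      have := congrFun h (x, y, z)
      simp only [Function.comp, map12, map13, pentMap, Prod.mk.injEq] at this
      exact this.1.symm
    · intro x y
      funext z
      have := congrFun h (x, y, z)
      simp only [Function.comp, map12, map13, pentMap, Prod.mk.injEq] at this
      exact this.2.2.symm
  · rintro ⟨h1, h2⟩
    funext p
    obtain ⟨x, y, z⟩ := p
    simp only [Function.comp, map12, map13, pentMap, Prod.mk.injEq]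
    refine ⟨(h1 x y z).symm, ?_, ?_⟩
    · rw [h2 x z]
    · rw [h2 x y]
end

section
/- Every set-theoretic solution of the Pentagon Equation on a left-zero semigroup is commutative, and it is bijective if and only if it is non-degenerate. -/
/-- Every solution on a left-zero semigroup (`x·y = x`) is commutative, and it is
bijective iff it is non-degenerate. -/
theorem stmt_2 {S : Type*} (θ : S → S → S)
    (hsol : IsPentagonSolution (pentMap (fun x _ => x) θ)) :
    IsCommutativeSolution (pentMap (fun x _ => x) θ) ∧
      (Function.Bijective (pentMap (fun x _ => x) θ) ↔
        ∀ x : S, Function.Bijective (θ x)) := by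
  constructor
  · funext p
    obtain ⟨x, y, z⟩ := p
    simp [map12, map13, pentMap]
  · constructor
    · intro hb x
      constructor
      · intro a b hab
        have := hb.1 (show pentMap (fun x _ => x) θ (x, a) = pentMap (fun x _ => x) θ (x, b) by
          simp [pentMap, hab])
        exact (Prod.mk.injEq _ _ _ _).mp this |>.2
      · intro c
        obtain ⟨⟨a, b⟩, hab⟩ := hb.2 (x, c)
        simp [pentMap] at hab
        exact ⟨b, hab.1 ▸ hab.2⟩
    · intro h
      constructor
      · rintro ⟨x, y⟩ ⟨x', y'⟩ hxy
        simp [pentMap] at hxy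
        obtain ⟨rfl, h2⟩ := hxy
        exact Prod.ext rfl ((h x).1 h2)
      · rintro ⟨x, c⟩
        obtain ⟨y, hy⟩ := (h x).2 c
        exact ⟨(x, y), by simp [pentMap, hy]⟩
end

section
/- Let (S,s) be a commutative non-degenerate set-theoretic solution of the Pentagon Equation, with associated permutation group G(S,s) = ⟨θ_x : x ∈ S⟩ ≤ Sym(S). Then for every orbit O of the action of G(S,s) on S, there exists z ∈ O with θ_z = id_S. -/
/-- A commutative non-degenerate solution of the Pentagon Equation: for every orbit of the
associated permutation group there is `z` in the orbit with `θ_z = id`. -/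
theorem stmt_3 {S : Type*} (mul : S → S → S) (θ : S → Equiv.Perm S)
    (hassoc : ∀ x y z : S, mul (mul x y) z = mul x (mul y z))
    (hwc : ∀ x y z : S, mul (mul x y) z = mul (mul x z) y)
    (hmul : ∀ x y : S, θ (mul x y) = θ x)
    (heq2 : ∀ x y z : S, mul (θ x y) (θ (mul x y) z) = θ x (mul y z))
    (heq3 : ∀ x y : S, θ (θ x y) * θ (mul x y) = θ y) :
    ∀ x : S, ∃ z ∈ MulAction.orbit (Subgroup.closure (Set.range θ)) x,
      θ z = 1 := by
  intro x
  refine ⟨θ x x, ?_, ?_⟩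
  · exact ⟨⟨θ x, Subgroup.subset_closure ⟨x, rfl⟩⟩, rfl⟩
  · have h := heq3 x x
    rw [hmul x x] at h
    exact mul_right_cancel (h.trans (one_mul (θ x)).symm)
end

section
/- Let (S,s) be a finite commutative non-degenerate set-theoretic solution of the Pentagon Equation. Then for every z ∈ S and every g in the associated permutation group G(S,s), one has θ_{g(z)} = θ_z ∘ g⁻¹. -/
/-- For a finite commutative non-degenerate solution of the Pentagon Equation,
`θ_{g(z)} = θ_z ∘ g⁻¹` for every `g` in the associated permutation group. -/
theorem stmt_4 {S : Type*} [Finite S] (mul : S → S → S) (θ : S → Equiv.Perm S)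
    (hassoc : ∀ x y z : S, mul (mul x y) z = mul x (mul y z))
    (hwc : ∀ x y z : S, mul (mul x y) z = mul (mul x z) y)
    (hmul : ∀ x y : S, θ (mul x y) = θ x)
    (heq2 : ∀ x y z : S, mul (θ x y) (θ (mul x y) z) = θ x (mul y z))
    (heq3 : ∀ x y : S, θ (θ x y) * θ (mul x y) = θ y) :
    ∀ g : Equiv.Perm S, g ∈ Subgroup.closure (Set.range θ) →
      ∀ z : S, θ (g z) = θ z * g⁻¹ := by
  intro g hg
  induction hg using Subgroup.closure_induction with
  | mem g hgm =>
    obtain ⟨x, rfl⟩ := hgm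
    intro z
    have h := heq3 x z
    rw [hmul x z] at h
    exact eq_mul_inv_of_mul_eq h
  | one => intro z; simp
  | mul a b _ _ ha hb =>
    intro z
    have : (a * b) z = a (b z) := rfl
    rw [this, ha, hb, mul_inv_rev, mul_assoc]
  | inv a _ ha =>
    intro z
    have h := ha (a⁻¹ z)
    rw [show a (a⁻¹ z) = z from Equiv.apply_symm_apply a z] at h
    rw [inv_inv, h, mul_assoc, inv_mul_cancel, mul_one]
end

section
/- Let (S,s) be a finite commutative non-degenerate set-theoretic solution of the Pentagon Equation. Then the action of the associated permutation group G(S,s) on S is semi-regular: if g(z) = g'(z) for g,g' ∈ G(S,s) and z ∈ S, then g = g'. -/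
/-- For a finite commutative non-degenerate solution of the Pentagon Equation, the action of
the associated permutation group on `S` is semi-regular: `g(z) = g'(z)` implies `g = g'`. -/
theorem stmt_5 {S : Type*} [Finite S] (mul : S → S → S) (θ : S → Equiv.Perm S)
    (hassoc : ∀ x y z : S, mul (mul x y) z = mul x (mul y z))
    (hwc : ∀ x y z : S, mul (mul x y) z = mul (mul x z) y)
    (hmul : ∀ x y : S, θ (mul x y) = θ x)
    (heq2 : ∀ x y z : S, mul (θ x y) (θ (mul x y) z) = θ x (mul y z))
    (heq3 : ∀ x y : S, θ (θ x y) * θ (mul x y) = θ y) :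
    ∀ g g' : Equiv.Perm S, g ∈ Subgroup.closure (Set.range θ) →
      g' ∈ Subgroup.closure (Set.range θ) →
      ∀ z : S, g z = g' z → g = g' := by
  -- Key lemma: θ (g y) = θ y * g⁻¹ for all g in the closure.
  have key : ∀ g ∈ Subgroup.closure (Set.range θ), ∀ y : S, θ (g y) = θ y * g⁻¹ := by
    intro g hg
    induction hg using Subgroup.closure_induction with
    | mem f hf =>
      obtain ⟨x, rfl⟩ := hf
      intro y
      have h3 := heq3 x y
      rw [hmul x y] at h3
      calc θ (θ x y) = θ (θ x y) * θ x * (θ x)⁻¹ := by group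
        _ = θ y * (θ x)⁻¹ := by rw [h3]
    | one => intro y; simp
    | mul a b _ _ ha hb =>
      intro y
      have : (a * b) y = a (b y) := rfl
      rw [this, ha (b y), hb y]
      group
    | inv a _ ha =>
      intro y
      have h := ha (a⁻¹ y)
      have : a (a⁻¹ y) = y := by simp
      rw [this] at h
      rw [h]; group
  intro g g' hg hg' z hz
  have hh : g'⁻¹ * g ∈ Subgroup.closure (Set.range θ) := mul_mem (inv_mem hg') hg
  have hfix : (g'⁻¹ * g) z = z := by
    show g'⁻¹ (g z) = z
    rw [hz]; simp
  have := key _ hh z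
  rw [hfix] at this
  have h1 : (g'⁻¹ * g)⁻¹ = 1 :=
    mul_left_cancel (a := θ z) (by rw [mul_one, ← this])
  have : g'⁻¹ * g = 1 := by simpa using congrArg Inv.inv h1
  calc g = g' * (g'⁻¹ * g) := by group
    _ = g' := by rw [this]; group
end

section
/- Let (S,·) be a weak commutative semigroup, ∼ a semigroup congruence such that S/∼ is a left-zero semigroup, and G a subgroup of Aut(S,·) acting semi-regularly on S with orbits S₁,…,S_r. Suppose every orbit S_i is a set of representatives of S/∼ and the partition into ∼-classes is a system of blocks for G. Fix a ∼-class T and define θ : S → G by θ_s = id for s ∈ T and θ_{g(s)} = g⁻¹ for s ∈ T, g ∈ G. Then s(x,y) := (x·y, θ_x(y)) defines a commutative non-degenerate set-theoretic solution of the Pentagon Equation. -/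
/-- Construction of commutative non-degenerate solutions of the Pentagon Equation from a
weak commutative semigroup `(S,·)`, a congruence `r` with left-zero quotient, and a
semi-regular subgroup `G` of `Aut(S,·)` whose orbits are sets of representatives of the
congruence classes, the congruence classes forming a system of blocks for `G`. -/
theorem stmt_6 {S : Type*} (mul : S → S → S) (r : S → S → Prop)
    (G : Subgroup (Equiv.Perm S)) (t₀ : S) (θ : S → Equiv.Perm S)
    -- `(S,·)` is a weak commutative semigroup
    (hassoc : ∀ x y z : S, mul (mul x y) z = mul x (mul y z))
    (hwc : ∀ x y z : S, mul (mul x y) z = mul (mul x z) y)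
    -- `r` is a congruence of `(S,·)`
    (hrequiv : Equivalence r)
    (hrcong : ∀ x x' y y' : S, r x x' → r y y' → r (mul x y) (mul x' y'))
    -- the quotient `S/r` is a left-zero semigroup
    (hlz : ∀ x y : S, r (mul x y) x)
    -- `G` consists of automorphisms of `(S,·)`
    (hGaut : ∀ g ∈ G, ∀ x y : S, g (mul x y) = mul (g x) (g y))
    -- the action of `G` on `S` is semi-regular
    (hsr : ∀ g ∈ G, ∀ x : S, g x = x → g = 1)
    -- every orbit is a set of representatives of `S/r`
    (hrep : ∀ x y : S, ∃! z : S,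
      z ∈ MulAction.orbit G x ∧ r z y)
    -- the partition induced by `r` is a system of blocks for `G`
    (hblocks : ∀ g ∈ G, ∀ t : S,
      g '' {x | r x t} = {x | r x t} ∨ Disjoint (g '' {x | r x t}) {x | r x t})
    -- `θ` is defined by `θ_s = id` for `s` in the class `T` of `t₀`, and `θ_{g(s)} = g⁻¹`
    (hθ1 : ∀ s : S, r s t₀ → θ s = 1)
    (hθ2 : ∀ s : S, ∀ g ∈ G, r s t₀ → θ (g s) = g⁻¹) :
    -- then `s(x,y) = (x·y, θ_x(y))` is a commutative non-degenerate solution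
    (∀ x y : S, θ (mul x y) = θ x) ∧
    (∀ x y z : S, mul (θ x y) (θ (mul x y) z) = θ x (mul y z)) ∧
    (∀ x y : S, θ (θ x y) * θ (mul x y) = θ y) := by
  have hdec : ∀ x : S, ∃ g, ∃ _ : g ∈ G, ∃ s : S, r s t₀ ∧ x = g s ∧ θ x = g⁻¹ := by
    intro x
    obtain ⟨z, ⟨hz1, hz2⟩, -⟩ := hrep x t₀
    obtain ⟨g, hg⟩ := hz1
    have hgx : (g : Equiv.Perm S) x = z := hg
    have hx : x = ((g : Equiv.Perm S)⁻¹) z := by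
      rw [← hgx, ← Equiv.Perm.mul_apply, inv_mul_cancel, Equiv.Perm.one_apply]
    refine ⟨(g : Equiv.Perm S)⁻¹, G.inv_mem g.2, z, hz2, hx, ?_⟩
    rw [hx, hθ2 z _ (G.inv_mem g.2) hz2]
  have key : ∀ g ∈ G, ∀ s : S, r s t₀ → ∀ y : S, θ (mul (g s) y) = g⁻¹ := by
    intro g hg s hs y
    have h1 : (g⁻¹ : Equiv.Perm S) (mul (g s) y) = mul s (g⁻¹ y) := by
      rw [hGaut g⁻¹ (G.inv_mem hg), ← Equiv.Perm.mul_apply, inv_mul_cancel, Equiv.Perm.one_apply]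
    have h2 : r ((g⁻¹ : Equiv.Perm S) (mul (g s) y)) t₀ := by
      rw [h1]; exact hrequiv.trans (hlz s (g⁻¹ y)) hs
    have h3 := hθ2 _ g hg h2
    rwa [← Equiv.Perm.mul_apply, mul_inv_cancel, Equiv.Perm.one_apply] at h3
  refine ⟨?_, ?_, ?_⟩
  · intro x y
    obtain ⟨g, hg, s, hs, hx, hθx⟩ := hdec x
    rw [hx, key g hg s hs y, ← hx, hθx]
  · intro x y z
    obtain ⟨g, hg, s, hs, hx, hθx⟩ := hdec x
    have h1 : θ (mul x y) = g⁻¹ := by rw [hx]; exact key g hg s hs y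
    rw [h1, hθx, ← hGaut g⁻¹ (G.inv_mem hg)]
  · intro x y
    obtain ⟨g, hg, s, hs, hx, hθx⟩ := hdec x
    obtain ⟨h, hh, u, hu, hy, hθy⟩ := hdec y
    have h1 : θ (mul x y) = g⁻¹ := by rw [hx]; exact key g hg s hs y
    have h2 : θ x y = (g⁻¹ * h) u := by rw [hθx, hy]; rfl
    have h3 : θ (θ x y) = (g⁻¹ * h)⁻¹ := by
      rw [h2]; exact hθ2 u _ (G.mul_mem (G.inv_mem hg) hh) hu
    rw [h3, h1, hθy]
    group
end

section
/- Let S be a set with left-zero multiplication, G ≤ Sym(S) acting semi-regularly with orbits S₁,…,S_r, and pick s_i ∈ S_i for each i. Define θ : S → G by θ_{x} = g⁻¹ where g is the unique element of G with g(s_i) = x, for x ∈ S_i. Then s(x,y) := (x, θ_x(y)) is a commutative non-degenerate set-theoretic solution of the Pentagon Equation on the left-zero semigroup S. -/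
/-- Construction of commutative non-degenerate solutions of the Pentagon Equation on a
left-zero semigroup from a semi-regular subgroup `G ≤ Sym(S)`: choosing a representative
`rep x` in each orbit and setting `θ_x = g⁻¹` where `g` is the unique element of `G` with
`g(rep x) = x`, the map `s(x,y) = (x, θ_x(y))` is a commutative non-degenerate solution. -/
theorem stmt_7 {S : Type*} (G : Subgroup (Equiv.Perm S))
    (rep : S → S) (θ : S → Equiv.Perm S)
    -- the action of `G` on `S` is semi-regular
    (hsr : ∀ g ∈ G, ∀ x : S, g x = x → g = 1)
    -- `rep` picks one element in each orbit
    (hrep1 : ∀ x : S, rep x ∈ MulAction.orbit G x)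
    (hrep2 : ∀ x y : S, y ∈ MulAction.orbit G x → rep y = rep x)
    -- `θ_x = g⁻¹` for the unique `g ∈ G` with `g(rep x) = x`
    (hθmem : ∀ x : S, θ x ∈ G)
    (hθ : ∀ x : S, (θ x)⁻¹ (rep x) = x) :
    -- then `s(x,y) = (x, θ_x(y))` is a commutative non-degenerate solution on the
    -- left-zero semigroup `S`: each `θ_x` is bijective (being a permutation) and
    (∀ x : S, Function.Bijective (θ x)) ∧
    (∀ x y : S, θ (θ x y) * θ x = θ y) := by
  refine ⟨fun x => (θ x).bijective, fun x y => ?_⟩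
  set z := θ x y with hz
  have horb : z ∈ MulAction.orbit G y := ⟨⟨θ x, hθmem x⟩, rfl⟩
  have hrz : rep z = rep y := hrep2 y z horb
  -- g := θ z * θ x * (θ y)⁻¹ fixes rep y
  have hg : (θ z * θ x * (θ y)⁻¹) (rep y) = rep y := by
    have h1 : (θ y)⁻¹ (rep y) = y := hθ y
    have h2 : (θ z)⁻¹ (rep y) = z := by rw [← hrz]; exact hθ z
    have : (θ z) z = rep y := by
      have := congrArg (θ z) h2
      simpa using this.symm
    simp only [Equiv.Perm.mul_apply, h1, ← hz, this]
  have hmem : θ z * θ x * (θ y)⁻¹ ∈ G :=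
    mul_mem (mul_mem (hθmem z) (hθmem x)) (inv_mem (hθmem y))
  have := hsr _ hmem _ hg
  calc θ z * θ x = (θ z * θ x * (θ y)⁻¹) * θ y := by group
    _ = θ y := by rw [this]; group
end

section
/- Let (S,s) be a commutative non-degenerate solution of the Pentagon Equation. The retract relation x ∼ y ⟺ θ_x = θ_y is a congruence compatible with both the semigroup operation and the maps θ: if x₁ ∼ x₂ and y₁ ∼ y₂ then x₁·y₁ ∼ x₂·y₂ and θ_{x₁}(y₁) ∼ θ_{x₂}(y₂); moreover the induced pair (S/∼, s̄), with s̄(x̄,ȳ) = (x̄·ȳ, θ̄_{x̄}(ȳ)), is a commutative non-degenerate solution of the Pentagon Equation. -/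
/-- The retract relation `x ∼ y ⟺ θ_x = θ_y`. -/
def retractSetoid {S : Type*} (θ : S → Equiv.Perm S) : Setoid S where
  r x y := θ x = θ y
  iseqv := ⟨fun _ => rfl, Eq.symm, Eq.trans⟩

/-- The retract relation of a commutative non-degenerate solution of the Pentagon Equation
is a congruence compatible with `·` and `θ`, and the induced pair on the quotient is again
a commutative non-degenerate solution. -/
theorem stmt_8 {S : Type*} (mul : S → S → S) (θ : S → Equiv.Perm S)
    (hassoc : ∀ x y z : S, mul (mul x y) z = mul x (mul y z))
    (hwc : ∀ x y z : S, mul (mul x y) z = mul (mul x z) y)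
    (hmul : ∀ x y : S, θ (mul x y) = θ x)
    (heq2 : ∀ x y z : S, mul (θ x y) (θ (mul x y) z) = θ x (mul y z))
    (heq3 : ∀ x y : S, θ (θ x y) * θ (mul x y) = θ y) :
    -- the retract relation is compatible with `·` and with `θ`
    (∀ x₁ x₂ y₁ y₂ : S, θ x₁ = θ x₂ → θ y₁ = θ y₂ →
      θ (mul x₁ y₁) = θ (mul x₂ y₂) ∧ θ (θ x₁ y₁) = θ (θ x₂ y₂)) ∧
    -- the induced pair on the quotient is a commutative non-degenerate solution
    (∃ (m : Quotient (retractSetoid θ) → Quotient (retractSetoid θ) → Quotient (retractSetoid θ))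
       (Θ : Quotient (retractSetoid θ) → Quotient (retractSetoid θ) → Quotient (retractSetoid θ)),
      (∀ x y : S, m (Quotient.mk (retractSetoid θ) x) (Quotient.mk (retractSetoid θ) y) =
        Quotient.mk (retractSetoid θ) (mul x y)) ∧
      (∀ x y : S, Θ (Quotient.mk (retractSetoid θ) x) (Quotient.mk (retractSetoid θ) y) =
        Quotient.mk (retractSetoid θ) (θ x y)) ∧
      (∀ a b c, m (m a b) c = m a (m b c)) ∧
      (∀ a b c, m (m a b) c = m (m a c) b) ∧
      (∀ a b c, Θ (m a b) c = Θ a c) ∧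
      (∀ a b c, m (Θ a b) (Θ (m a b) c) = Θ a (m b c)) ∧
      (∀ a b c, Θ (Θ a b) (Θ (m a b) c) = Θ b c) ∧
      (∀ a, Function.Bijective (Θ a))) := by
  -- θ (θ x y) = θ y * (θ x)⁻¹
  have hθθ : ∀ x y : S, θ (θ x y) = θ y * (θ x)⁻¹ := by
    intro x y
    have h := heq3 x y
    rw [hmul] at h
    calc θ (θ x y) = θ (θ x y) * θ x * (θ x)⁻¹ := by group
    _ = θ y * (θ x)⁻¹ := by rw [h]
  have hcong : ∀ x₁ x₂ y₁ y₂ : S, θ x₁ = θ x₂ → θ y₁ = θ y₂ →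
      θ (mul x₁ y₁) = θ (mul x₂ y₂) ∧ θ (θ x₁ y₁) = θ (θ x₂ y₂) := by
    intro x₁ x₂ y₁ y₂ hx hy
    refine ⟨by rw [hmul, hmul, hx], ?_⟩
    rw [hθθ, hθθ, hx, hy]
  refine ⟨hcong, ?_⟩
  set Q := Quotient (retractSetoid θ)
  refine ⟨fun a b => Quotient.liftOn₂ a b
      (fun x y => Quotient.mk (retractSetoid θ) (mul x y))
      (fun x₁ y₁ x₂ y₂ hx hy => Quotient.sound ((hcong x₁ x₂ y₁ y₂ hx hy).1)),
    fun a b => Quotient.liftOn₂ a b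
      (fun x y => Quotient.mk (retractSetoid θ) (θ x y))
      (fun x₁ y₁ x₂ y₂ hx hy => Quotient.sound ((hcong x₁ x₂ y₁ y₂ hx hy).2)),
    fun x y => rfl, fun x y => rfl, ?_, ?_, ?_, ?_, ?_, ?_⟩
  · intro a b c
    induction a using Quotient.ind; induction b using Quotient.ind; induction c using Quotient.ind
    exact congrArg _ (hassoc _ _ _)
  · intro a b c
    induction a using Quotient.ind; induction b using Quotient.ind; induction c using Quotient.ind
    exact congrArg _ (hwc _ _ _)
  · intro a b c
    induction a using Quotient.ind with | _ x =>
    induction b using Quotient.ind with | _ y =>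
    induction c using Quotient.ind with | _ z =>
    exact Quotient.sound (by show θ (θ (mul x y) z) = θ (θ x z); rw [hmul])
  · intro a b c
    induction a using Quotient.ind with | _ x =>
    induction b using Quotient.ind with | _ y =>
    induction c using Quotient.ind with | _ z =>
    exact congrArg _ (heq2 x y z)
  · intro a b c
    induction a using Quotient.ind with | _ x =>
    induction b using Quotient.ind with | _ y =>
    induction c using Quotient.ind with | _ z =>
    show Quotient.mk (retractSetoid θ) (θ (θ x y) (θ (mul x y) z)) =
      Quotient.mk (retractSetoid θ) (θ y z)
    refine congrArg _ ?_
    have := congrFun (congrArg (fun (e : Equiv.Perm S) => (e : S → S)) (heq3 x y)) z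
    simpa using this
  · intro a
    induction a using Quotient.ind with | _ x =>
    constructor
    · intro b c
      induction b using Quotient.ind with | _ y =>
      induction c using Quotient.ind with | _ z =>
      intro h
      refine Quotient.sound ?_
      have h' : θ (θ x y) = θ (θ x z) := Quotient.exact h
      rw [hθθ, hθθ] at h'
      show θ y = θ z
      exact mul_right_cancel h'
    · intro b
      induction b using Quotient.ind with | _ z =>
      exact ⟨Quotient.mk _ ((θ x)⁻¹ z), congrArg _ (Equiv.apply_symm_apply _ _)⟩
end

section
/- Let (S,s) be a finite commutative non-degenerate solution of the Pentagon Equation, and let g ∈ G(S,s). Then for every orbit Z of the action of G(S,s) on S, there exists a unique x ∈ Z with θ_x = g. -/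
/-- For a finite commutative non-degenerate solution of the Pentagon Equation, every element
`g` of the associated permutation group is realized as `θ_x` for a unique `x` in each orbit. -/
theorem stmt_9 {S : Type*} [Finite S] (mul : S → S → S) (θ : S → Equiv.Perm S)
    (hassoc : ∀ x y z : S, mul (mul x y) z = mul x (mul y z))
    (hwc : ∀ x y z : S, mul (mul x y) z = mul (mul x z) y)
    (hmul : ∀ x y : S, θ (mul x y) = θ x)
    (heq2 : ∀ x y z : S, mul (θ x y) (θ (mul x y) z) = θ x (mul y z))
    (heq3 : ∀ x y : S, θ (θ x y) * θ (mul x y) = θ y) :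
    ∀ g : Equiv.Perm S, g ∈ Subgroup.closure (Set.range θ) →
      ∀ x : S, ∃! z : S,
        z ∈ MulAction.orbit (Subgroup.closure (Set.range θ)) x ∧ θ z = g := by
  intro g hg x
  have key : ∀ g ∈ Subgroup.closure (Set.range θ), ∀ z : S, θ (g z) = θ z * g⁻¹ := by
    intro g hg
    induction hg using Subgroup.closure_induction with
    | mem a ha =>
      obtain ⟨w, rfl⟩ := ha
      intro z
      have h3 := heq3 w z
      rw [hmul w z] at h3
      exact eq_mul_inv_of_mul_eq h3
    | one => intro z; simp
    | mul a b ha hb iha ihb =>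
      intro z
      have : (a * b) z = a (b z) := rfl
      rw [this, iha, ihb, mul_inv_rev, mul_assoc]
    | inv a ha iha =>
      intro z
      have h := iha (a⁻¹ z)
      rw [show a (a⁻¹ z) = z from a.apply_symm_apply z] at h
      rw [inv_inv]
      rw [h, mul_assoc, inv_mul_cancel, mul_one]
  have hθx : θ x ∈ Subgroup.closure (Set.range θ) :=
    Subgroup.subset_closure ⟨x, rfl⟩
  have hh : g⁻¹ * θ x ∈ Subgroup.closure (Set.range θ) :=
    mul_mem (inv_mem hg) hθx
  refine ⟨(g⁻¹ * θ x) x, ⟨⟨⟨g⁻¹ * θ x, hh⟩, rfl⟩, ?_⟩, ?_⟩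
  · rw [key _ hh x]
    group
  · rintro y ⟨⟨⟨h, hmem⟩, rfl⟩, hy⟩
    have : θ (h x) = θ x * h⁻¹ := key h hmem x
    have hy' : θ x * h⁻¹ = g := by
      rw [← this]; exact hy
    have hh' : h = g⁻¹ * θ x := by
      have : h⁻¹ = (θ x)⁻¹ * g := by
        rw [← hy']; group
      rw [← inv_inv h, this, mul_inv_rev, inv_inv]
    subst hh'
    rfl
end

section
/- Let (S,s) be a commutative non-degenerate solution of the Pentagon Equation. Then its retraction Ret(S,s) is irretractable, i.e. the induced maps satisfy θ̄_{x̄} = θ̄_{ȳ} if and only if x̄ = ȳ. -/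
/-- The retraction of a commutative non-degenerate solution of the Pentagon Equation is
irretractable: the induced maps satisfy `θ̄_{x̄} = θ̄_{ȳ}` iff `x̄ = ȳ`. -/
theorem stmt_11 {S : Type*} (mul : S → S → S) (θ : S → Equiv.Perm S)
    (hassoc : ∀ x y z : S, mul (mul x y) z = mul x (mul y z))
    (hwc : ∀ x y z : S, mul (mul x y) z = mul (mul x z) y)
    (hmul : ∀ x y : S, θ (mul x y) = θ x)
    (heq2 : ∀ x y z : S, mul (θ x y) (θ (mul x y) z) = θ x (mul y z))
    (heq3 : ∀ x y : S, θ (θ x y) * θ (mul x y) = θ y)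
    -- `Θ` is the induced map of the retraction `Ret(S,s)`
    (Θ : Quotient (retractSetoid θ) → Quotient (retractSetoid θ) → Quotient (retractSetoid θ))
    (hΘ : ∀ x y : S, Θ (Quotient.mk (retractSetoid θ) x) (Quotient.mk (retractSetoid θ) y) =
      Quotient.mk (retractSetoid θ) (θ x y)) :
    ∀ a b : Quotient (retractSetoid θ), (∀ c, Θ a c = Θ b c) ↔ a = b := by
  intro a b
  constructor
  · refine Quotient.inductionOn₂ a b ?_
    intro x y h
    have hc := h (Quotient.mk (retractSetoid θ) x)
    rw [hΘ, hΘ] at hc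
    have hxy : θ (θ x x) = θ (θ y x) := Quotient.exact hc
    have h1 : θ (θ x x) * θ x = θ x := by
      have := heq3 x x; rwa [hmul] at this
    have h2 : θ (θ y x) * θ y = θ x := by
      have := heq3 y x; rwa [hmul] at this
    apply Quotient.sound
    show θ x = θ y
    have : θ (θ x x) = 1 :=
      mul_right_cancel (b := θ x) (h1.trans (one_mul (θ x)).symm)
    rw [this] at hxy
    have : θ y = θ x := by
      have := h2
      rw [← hxy, one_mul] at this
      exact this
    exact this.symm
  · rintro rfl _; rfl
end

section
/- Let (S,s) be a finite commutative non-degenerate solution of the Pentagon Equation. Then (S,s) is irretractable (θ_x = θ_y implies x = y) if and only if the associated permutation group G(S,s) acts regularly on S (i.e. transitively with trivial stabilizers). -/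
/-- A finite commutative non-degenerate solution of the Pentagon Equation is irretractable
iff its associated permutation group acts regularly (transitively with trivial stabilizers)
on `S`. -/
theorem stmt_12 {S : Type*} [Finite S] [Nonempty S] (mul : S → S → S) (θ : S → Equiv.Perm S)
    (hassoc : ∀ x y z : S, mul (mul x y) z = mul x (mul y z))
    (hwc : ∀ x y z : S, mul (mul x y) z = mul (mul x z) y)
    (hmul : ∀ x y : S, θ (mul x y) = θ x)
    (heq2 : ∀ x y z : S, mul (θ x y) (θ (mul x y) z) = θ x (mul y z))
    (heq3 : ∀ x y : S, θ (θ x y) * θ (mul x y) = θ y) :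
    Function.Injective θ ↔
      ((∀ x y : S, y ∈ MulAction.orbit (Subgroup.closure (Set.range θ)) x) ∧
       (∀ g : Equiv.Perm S, g ∈ Subgroup.closure (Set.range θ) →
         ∀ x : S, g x = x → g = 1)) := by
  have key : ∀ x y : S, θ (θ x y) = θ y * (θ x)⁻¹ := by
    intro x y
    have h := heq3 x y
    rw [hmul] at h
    exact eq_mul_inv_of_mul_eq h
  obtain ⟨x₀⟩ := ‹Nonempty S›
  set e := θ x₀ x₀ with he_def
  have he : θ e = 1 := by rw [he_def, key]; group
  have hinv : ∀ x, θ (θ x e) = (θ x)⁻¹ := fun x => by rw [key, he, one_mul]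
  have hmulc : ∀ x y : S, ∃ a, θ a = θ x * θ y := by
    intro x y
    refine ⟨θ (θ y e) x, ?_⟩
    rw [key, hinv, inv_inv]
  have hrange : ∀ g ∈ Subgroup.closure (Set.range θ), ∃ a, θ a = g := by
    intro g hg
    induction hg using Subgroup.closure_induction with
    | mem x hx => exact hx
    | one => exact ⟨e, he⟩
    | mul x y _ _ hx hy =>
        obtain ⟨a, ha⟩ := hx; obtain ⟨b, hb⟩ := hy
        obtain ⟨c, hc⟩ := hmulc a b
        exact ⟨c, by rw [hc, ha, hb]⟩
    | inv x _ hx =>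
        obtain ⟨a, ha⟩ := hx
        exact ⟨θ a e, by rw [hinv, ha]⟩
  have semireg : ∀ g : Equiv.Perm S, g ∈ Subgroup.closure (Set.range θ) →
      ∀ x : S, g x = x → g = 1 := by
    intro g hg x hx
    obtain ⟨a, ha⟩ := hrange g hg
    have h1 : θ (θ a x) = θ x * (θ a)⁻¹ := key a x
    have h2 : θ a x = x := by rw [ha]; exact hx
    rw [h2] at h1
    have : (θ a)⁻¹ = 1 := by
      have := mul_left_cancel (a := θ x) (b := (θ a)⁻¹) (c := 1)
        (by rw [mul_one, ← h1])
      exact this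
    rw [← ha, ← inv_inv (θ a), this, inv_one]
  constructor
  · intro hinj
    have hee : ∀ x, θ x x = e := by
      intro x
      apply hinj
      rw [key, he]
      group
    refine ⟨?_, semireg⟩
    intro x y
    have hxmem : θ x ∈ Subgroup.closure (Set.range θ) :=
      Subgroup.subset_closure ⟨x, rfl⟩
    have hymem : (θ y)⁻¹ ∈ Subgroup.closure (Set.range θ) :=
      inv_mem (Subgroup.subset_closure ⟨y, rfl⟩)
    refine ⟨⟨(θ y)⁻¹ * θ x, mul_mem hymem hxmem⟩, ?_⟩
    show ((θ y)⁻¹ * θ x) x = y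
    rw [Equiv.Perm.mul_apply, hee x, ← hee y]
    exact Equiv.symm_apply_apply _ _
  · rintro ⟨htrans, -⟩ x y hxy
    obtain ⟨⟨g, hg⟩, hgx⟩ := htrans (θ x x) (θ y y)
    obtain ⟨a, ha⟩ := hrange g hg
    have hgx' : g (θ x x) = θ y y := hgx
    have h1 : θ (θ a (θ x x)) = θ (θ x x) * (θ a)⁻¹ := key _ _
    have h2 : θ (θ x x) = 1 := by rw [key]; group
    have h3 : θ (θ y y) = 1 := by rw [key]; group
    have h4 : θ a (θ x x) = θ y y := by rw [ha]; exact hgx'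
    rw [h4, h3, h2, one_mul] at h1
    have hga : g = 1 := by rw [← ha, ← inv_inv (θ a), ← h1, inv_one]
    have h5 : θ x x = θ y y := by rw [← hgx', hga]; rfl
    have := congrArg (⇑(θ x)⁻¹) h5
    rwa [Equiv.Perm.inv_def, Equiv.symm_apply_apply, hxy, Equiv.symm_apply_apply] at this
end

section
/- Let (S,s) be a finite commutative non-degenerate solution of the Pentagon Equation on a left-zero semigroup, and let Z be an orbit of the action of G(S,s) on S. Then the retraction Ret(S,s) is isomorphic (as a solution) to the subsolution (Z, s|_{Z×Z}). -/
/-- For a finite commutative non-degenerate solution on a left-zero semigroup (so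
`s(x,y) = (x, θ_x(y))` with `θ_{θ_x(y)} ∘ θ_x = θ_y`), the retraction `Ret(S,s)` is
isomorphic to the subsolution on any orbit `Z` of the associated permutation group. -/
theorem stmt_17 {S : Type*} [Finite S] (θ : S → Equiv.Perm S)
    (heq3 : ∀ x y : S, θ (θ x y) * θ x = θ y)
    (z₀ : S)
    -- `Θ` is the induced map of the retraction `Ret(S,s)`
    (Θ : Quotient (retractSetoid θ) → Quotient (retractSetoid θ) → Quotient (retractSetoid θ))
    (hΘ : ∀ x y : S, Θ (Quotient.mk (retractSetoid θ) x) (Quotient.mk (retractSetoid θ) y) =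
      Quotient.mk (retractSetoid θ) (θ x y)) :
    -- the orbit `Z` of `z₀` is a subsolution, and `Ret(S,s)` is isomorphic to it
    (∀ x y : S, x ∈ MulAction.orbit (Subgroup.closure (Set.range θ)) z₀ →
      y ∈ MulAction.orbit (Subgroup.closure (Set.range θ)) z₀ →
      θ x y ∈ MulAction.orbit (Subgroup.closure (Set.range θ)) z₀) ∧
    ∃ φ : Quotient (retractSetoid θ) ≃
        ↥(MulAction.orbit (Subgroup.closure (Set.range θ)) z₀),
      ∀ a b : Quotient (retractSetoid θ),
        (φ (Θ a b) : S) = θ (φ a : S) (φ b : S) := by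
  classical
  set G := Subgroup.closure (Set.range θ) with hGdef
  have hmemθ : ∀ x : S, θ x ∈ G := fun x => Subgroup.subset_closure ⟨x, rfl⟩
  have heq3' : ∀ x y : S, θ (θ x y) = θ y * (θ x)⁻¹ := fun x y =>
    eq_mul_inv_of_mul_eq (heq3 x y)
  -- key formula: θ (g z) = θ z * g⁻¹ for g ∈ G
  have key : ∀ g ∈ G, ∀ z : S, θ (g z) = θ z * g⁻¹ := by
    intro g hg
    induction hg using Subgroup.closure_induction with
    | mem x hx =>
      obtain ⟨u, rfl⟩ := hx
      intro z; exact heq3' u z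
    | one => intro z; simp
    | mul a b _ _ ha hb =>
      intro z
      have : (a * b : Equiv.Perm S) z = a (b z) := rfl
      rw [this, ha, hb, mul_inv_rev, mul_assoc]
    | inv a _ ha =>
      intro z
      have := ha (a⁻¹ z)
      rw [show a (a⁻¹ z) = z from a.apply_symm_apply z] at this
      rw [this]; group
  -- membership in orbit under applying elements of G
  have smul_mem : ∀ g ∈ G, ∀ y : S, y ∈ MulAction.orbit G z₀ → g y ∈ MulAction.orbit G z₀ := by
    rintro g hg y ⟨h, rfl⟩
    refine ⟨⟨g, hg⟩ * h, ?_⟩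
    rfl
  have part1 : ∀ x y : S, x ∈ MulAction.orbit G z₀ → y ∈ MulAction.orbit G z₀ →
      θ x y ∈ MulAction.orbit G z₀ := fun x y _ hy => smul_mem (θ x) (hmemθ x) y hy
  -- injectivity of θ on the orbit
  have inj : ∀ a b : S, a ∈ MulAction.orbit G z₀ → b ∈ MulAction.orbit G z₀ →
      θ a = θ b → a = b := by
    rintro a b ⟨g, rfl⟩ ⟨h, rfl⟩ hab
    have hab' : θ ((g : Equiv.Perm S) z₀) = θ ((h : Equiv.Perm S) z₀) := hab
    show (g : Equiv.Perm S) z₀ = (h : Equiv.Perm S) z₀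
    rw [key (g : Equiv.Perm S) g.2 z₀, key (h : Equiv.Perm S) h.2 z₀] at hab'
    clear hab
    have hab := hab'
    have : (g : Equiv.Perm S) = h := inv_injective (mul_left_cancel hab)
    rw [this]
  -- the candidate map
  set fval : S → S := fun x => ((θ x)⁻¹ * θ z₀) z₀ with hfval
  have fmem : ∀ x : S, fval x ∈ MulAction.orbit G z₀ := by
    intro x
    exact ⟨⟨(θ x)⁻¹ * θ z₀, mul_mem (inv_mem (hmemθ x)) (hmemθ z₀)⟩, rfl⟩
  have hfθ : ∀ x : S, θ (fval x) = θ x := by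
    intro x
    rw [hfval]
    rw [key _ (mul_mem (inv_mem (hmemθ x)) (hmemθ z₀)) z₀]
    group
  set f : Quotient (retractSetoid θ) → ↥(MulAction.orbit G z₀) :=
    Quotient.lift (fun x => (⟨fval x, fmem x⟩ : ↥(MulAction.orbit G z₀)))
      (by
        intro a b hab
        have hab' : θ a = θ b := hab
        simp only [hfval, hab', Subtype.mk.injEq]) with hf
  set ginv : ↥(MulAction.orbit G z₀) → Quotient (retractSetoid θ) :=
    fun z => Quotient.mk (retractSetoid θ) z.val with hginv
  have hleft : Function.LeftInverse ginv f := by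
    intro q
    induction q using Quotient.ind with
    | _ x => exact Quotient.sound (hfθ x)
  have hright : Function.RightInverse ginv f := by
    intro z
    apply Subtype.ext
    exact inj _ _ (fmem z.val) z.2 (hfθ z.val)
  refine ⟨part1, ⟨Equiv.mk f ginv hleft hright, ?_⟩⟩
  intro a b
  induction a using Quotient.ind with
  | _ x =>
    induction b using Quotient.ind with
    | _ y =>
      show (f (Θ (Quotient.mk _ x) (Quotient.mk _ y)) : S) = θ (f (Quotient.mk _ x) : S) (f (Quotient.mk _ y) : S)
      rw [hΘ]
      have h1 : (f (Quotient.mk (retractSetoid θ) (θ x y)) : S) = fval (θ x y) := rfl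
      have h2 : (f (Quotient.mk (retractSetoid θ) x) : S) = fval x := rfl
      have h3 : (f (Quotient.mk (retractSetoid θ) y) : S) = fval y := rfl
      rw [h1, h2, h3]
      apply inj _ _ (fmem _) (part1 _ _ (fmem x) (fmem y))
      rw [hfθ, heq3' x y, heq3' (fval x) (fval y), hfθ, hfθ]
end
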